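/- Under a (p,q,δ)-block-independent arrival distribution, the standard threshold secretary algorithm (which observes the first ⌊q/e⌋ blocks and thereafter accepts the first item exceeding all previously seen values) selects the maximum-value item with probability at least 1/e - (e+1)/q - δ - (1 - 1/e)^{p-1}. -/

import Mathlib

open scoped Classical

noncomputable section

/-- Probability of an event under a distribution `μ` on permutations of `Fin n`. -/
def prOf {n : ℕ} (μ : Equiv.Perm (Fin n) → ℝ) (E : Set (Equiv.Perm (Fin n))) : ℝ :=
  ∑ π : Equiv.Perm (Fin n), if π ∈ E then μ π else 0

/-- `μ` is a probability distribution on permutations of `Fin n`. -/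
def IsDist {n : ℕ} (μ : Equiv.Perm (Fin n) → ℝ) : Prop :=
  (∀ π, 0 ≤ μ π) ∧ ∑ π : Equiv.Perm (Fin n), μ π = 1

/-- `B` assigns positions `[n]` to `q` consecutive blocks of size between `⌊n/q⌋` and `⌈n/q⌉`. -/
def IsBlockPartition {n q : ℕ} (B : Fin n → Fin q) : Prop :=
  Monotone B ∧ ∀ j : Fin q,
    n / q ≤ (Finset.univ.filter (fun t => B t = j)).card ∧
    (Finset.univ.filter (fun t => B t = j)).card ≤ (n + q - 1) / q

/-- The `(p,q,δ)`-block-independence property. -/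
def BIP (n p q : ℕ) (δ : ℝ) (B : Fin n → Fin q) (μ : Equiv.Perm (Fin n) → ℝ) : Prop :=
  ∀ x : Fin p → Fin n, Function.Injective x → ∀ b : Fin p → Fin q,
    (1 - δ) * (1 / (q : ℝ)) ^ p ≤ prOf μ {π | ∀ i, B (π (x i)) = b i}

/-- The standard threshold secretary algorithm (with threshold after the first `T` blocks,
i.e. block indices `< T` are only observed) selects the maximum-value item: there is a time
`t` in a block of index `≥ T` which is the first post-threshold record
and the item arriving at time `t` has the maximum value.  Here `v y` is the value of item
`y` and `π.symm t` is the item arriving at time `t`. -/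
def SecretarySuccess {n q : ℕ} (B : Fin n → Fin q) (T : ℕ) (v : Fin n → ℝ)
    (π : Equiv.Perm (Fin n)) : Prop :=
  ∃ t : Fin n, T ≤ ((B t : Fin q) : ℕ) ∧
    (∀ s : Fin n, s < t →
      ¬ (T ≤ ((B s : Fin q) : ℕ) ∧ ∀ s' : Fin n, s' < s → v (π.symm s') < v (π.symm s))) ∧
    (∀ s : Fin n, s < t → v (π.symm s) < v (π.symm t)) ∧
    (∀ y : Fin n, v y ≤ v (π.symm t))

/-!
Follow the `p` best items in decreasing order of value. Suppose the best one arrives in a block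
`i ≥ T`, the items of ranks `1, …, m - 1` arrive in blocks after `i`, and the item of rank `m`
arrives before block `T`. A post-threshold record arriving before the best item beats the item of
rank `m`, so it has rank in `1, …, m - 1`, yet it arrives no later than block `i`: there is none,
and the algorithm picks the best item. These block patterns are disjoint for different `(i, m)`,
and block independence gives each of them probability at least `(1 - δ) q⁻ᵖ`. Summing the
geometric series over `m` bounds the contribution of block `i` below by
`(T/q) (1 - (1 - 1/e)^(p-1)) / (i + 1)`, and `∑_{T ≤ i < q} 1/(i+1) ≥ log ((q+1)/(T+1))`,
which is at least `1 - (e-1)/(q+1)` for `T = ⌊q/e⌋`.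
-/

open Finset

section

variable {n p q : ℕ} {μ : Equiv.Perm (Fin n) → ℝ}

lemma prOf_eq_sum_indicator (E : Set (Equiv.Perm (Fin n))) :
    prOf μ E = ∑ π, E.indicator μ π := rfl

lemma prOf_nonneg (hμ : ∀ π, 0 ≤ μ π) (E : Set (Equiv.Perm (Fin n))) : 0 ≤ prOf μ E :=
  sum_nonneg fun π _ => Set.indicator_nonneg (fun π _ => hμ π) π

lemma prOf_mono (hμ : ∀ π, 0 ≤ μ π) {E F : Set (Equiv.Perm (Fin n))} (hEF : E ⊆ F) :
    prOf μ E ≤ prOf μ F :=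
  sum_le_sum fun π _ => Set.indicator_le_indicator_of_subset hEF hμ π

lemma prOf_biUnion {ι : Type*} {s : Finset ι} {E : ι → Set (Equiv.Perm (Fin n))}
    (hE : (s : Set ι).PairwiseDisjoint E) :
    prOf μ (⋃ i ∈ s, E i) = ∑ i ∈ s, prOf μ (E i) := by
  simp only [prOf_eq_sum_indicator, Finset.indicator_biUnion_apply s E hE]
  exact sum_comm

/-- `x k` is the item of rank `k` under `v`, rank `0` being the best. -/
def IsRanking {α : Type*} [LT α] (v : Fin n → α) (x : Fin p → Fin n) : Prop :=
  ∀ z k, v (x k) < v z → ∃ k' < k, x k' = z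

lemma exists_injective_isRanking {α : Type*} [LinearOrder α] {v : Fin n → α}
    (hv : Function.Injective v) (hpn : p ≤ n) :
    ∃ x : Fin p → Fin n, Function.Injective x ∧ IsRanking v x := by
  set σ := Tuple.sort (OrderDual.toDual ∘ v)
  have hσ : StrictAnti (v ∘ σ) :=
    Antitone.strictAnti_of_injective (Tuple.monotone_sort (OrderDual.toDual ∘ v))
      (hv.comp σ.injective)
  refine ⟨σ ∘ Fin.castLE hpn, σ.injective.comp (Fin.castLE_injective hpn), fun z k hzk => ?_⟩
  have hlt : (σ.symm z : ℕ) < k := by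
    have hzk' : (v ∘ σ) (Fin.castLE hpn k) < (v ∘ σ) (σ.symm z) := by simpa using hzk
    exact hσ.lt_iff_gt.mp hzk'
  exact ⟨⟨σ.symm z, hlt.trans k.isLt⟩, hlt, by simp [Fin.castLE]⟩

lemma secretarySuccess_of_isRanking {B : Fin n → Fin q} (hB : Monotone B) {v : Fin n → ℝ}
    (hv : Function.Injective v) {x : Fin p → Fin n} (hx : IsRanking v x)
    {π : Equiv.Perm (Fin n)} {T : ℕ} (m : Fin p) (hfirst : T ≤ (B (π (x ⟨0, m.pos⟩)) : ℕ))
    (hmid : ∀ k : Fin p, 0 < (k : ℕ) → k < m → B (π (x ⟨0, m.pos⟩)) < B (π (x k)))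
    (hlast : (B (π (x m)) : ℕ) < T) :
    SecretarySuccess B T v π := by
  set best := x ⟨0, m.pos⟩
  have hbest : ∀ z, v z ≤ v best := fun z => not_lt.mp fun h => by
    obtain ⟨k, hk, -⟩ := hx z _ h
    exact Nat.not_lt_zero _ hk
  have hbest_lt : ∀ z ≠ best, v z < v best := fun z hz => (hbest z).lt_of_ne (hv.ne hz)
  refine ⟨π best, hfirst, ?_, fun s hs => ?_, fun z => by simpa using hbest z⟩
  · rintro s hs ⟨hsT, hrec⟩
    have hms : π (x m) < s := lt_of_not_ge fun h => by
      have := Fin.le_def.mp (hB h)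
      omega
    obtain ⟨k, hkm, hk⟩ := hx (π.symm s) m (by simpa using hrec _ hms)
    rcases Nat.eq_zero_or_pos k with hk0 | hk0
    · obtain rfl : k = ⟨0, m.pos⟩ := Fin.ext hk0
      simp [best, hk] at hs
    · have := hmid k hk0 hkm
      simp only [hk, Equiv.apply_symm_apply] at this
      exact (hB hs.le).not_gt this
  · rw [Equiv.symm_apply_apply]
    exact hbest_lt _ fun h => hs.ne (by simp [← h])

/-- Block assignments of the items of ranks `0, …, p - 1` that put rank `0` in block `i`,
ranks `1, …, j` after block `i`, and rank `j + 1` before block `τ`. -/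
def winPattern (p : ℕ) (τ i : Fin q) (j : ℕ) : Finset (Fin p → Fin q) :=
  Fintype.piFinset fun k =>
    if (k : ℕ) = 0 then {i} else if (k : ℕ) ≤ j then Ioi i
    else if (k : ℕ) = j + 1 then Iio τ else univ

lemma mem_winPattern {τ i : Fin q} {j : ℕ} {b : Fin p → Fin q} (hj : j + 1 < p) :
    b ∈ winPattern p τ i j ↔
      b ⟨0, by omega⟩ = i ∧ (∀ k : Fin p, 0 < (k : ℕ) → (k : ℕ) ≤ j → i < b k) ∧
        b ⟨j + 1, hj⟩ < τ := by
  simp only [winPattern, Fintype.mem_piFinset]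
  constructor
  · intro h
    refine ⟨by simpa using h ⟨0, by omega⟩, fun k hk0 hkj => ?_, by simpa using h ⟨j + 1, hj⟩⟩
    simpa [hk0.ne', hkj] using h k
  · rintro ⟨h0, hmid, hlast⟩ k
    split_ifs with hk0 hkj hkl
    · rw [mem_singleton, ← h0]
      exact congrArg b (Fin.ext hk0)
    · exact mem_Ioi.mpr (hmid k (Nat.pos_of_ne_zero hk0) hkj)
    · simpa [show k = ⟨j + 1, hj⟩ from Fin.ext hkl] using hlast
    · exact mem_univ _

lemma winPattern_pairwiseDisjoint (τ : Fin q) :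
    ((Ici τ ×ˢ range (p - 1) : Finset (Fin q × ℕ)) : Set (Fin q × ℕ)).PairwiseDisjoint
      fun ij => winPattern p τ ij.1 ij.2 := by
  suffices h : ∀ i i' : Fin q, ∀ j j' : ℕ, τ ≤ i → j + 1 < p → j' + 1 < p → j < j' →
      ∀ b, b ∈ winPattern p τ i j → b ∉ winPattern p τ i' j' by
    rintro ⟨i, j⟩ hij ⟨i', j'⟩ hij' hne
    simp only [coe_product, Set.mem_prod, mem_coe, mem_Ici, mem_range] at hij hij'
    refine disjoint_left.mpr fun b hb hb' => ?_
    have hii' : i = i' := by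
      rw [mem_winPattern (by omega)] at hb hb'
      exact hb.1.symm.trans hb'.1
    subst hii'
    rcases lt_trichotomy j j' with hjj' | rfl | hjj'
    · exact h i i j j' hij.1 (by omega) (by omega) hjj' b hb hb'
    · exact hne rfl
    · exact h i i j' j hij'.1 (by omega) (by omega) hjj' b hb' hb
  intro i i' j j' hτi hj hj' hjj' b hb hb'
  rw [mem_winPattern hj] at hb
  rw [mem_winPattern hj'] at hb'
  have hi' : i' = i := hb'.1.symm.trans hb.1
  subst hi'
  exact (hb.2.2.trans_le hτi).not_gt (hb'.2.1 ⟨j + 1, hj⟩ (by simp) hjj')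

lemma setOf_blocks_subset_success {B : Fin n → Fin q} (hB : Monotone B) {v : Fin n → ℝ}
    (hv : Function.Injective v) {x : Fin p → Fin n} (hx : IsRanking v x) {τ i : Fin q}
    (hτi : τ ≤ i) {j : ℕ} (hj : j + 1 < p) {b : Fin p → Fin q} (hb : b ∈ winPattern p τ i j) :
    {π : Equiv.Perm (Fin n) | ∀ k, B (π (x k)) = b k} ⊆ {π | SecretarySuccess B τ v π} := by
  intro π hπ
  rw [mem_winPattern hj] at hb
  obtain ⟨h0, hmid, hlast⟩ := hb
  refine secretarySuccess_of_isRanking hB hv hx ⟨j + 1, hj⟩ ?_ (fun k hk0 hkj => ?_) ?_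
  · rw [hπ, h0]
    exact hτi
  · rw [hπ, hπ, h0]
    exact hmid k hk0 (Nat.lt_succ_iff.mp hkj)
  · rw [hπ]
    exact hlast

lemma card_mul_le_prOf_of_BIP {δ : ℝ} {B : Fin n → Fin q}
    (hμ : ∀ π, 0 ≤ μ π) (h : BIP n p q δ B μ) {x : Fin p → Fin n} (hx : Function.Injective x)
    {S : Finset (Fin p → Fin q)} {E : Set (Equiv.Perm (Fin n))}
    (hS : ∀ b ∈ S, {π | ∀ k, B (π (x k)) = b k} ⊆ E) :
    #S * ((1 - δ) * (1 / (q : ℝ)) ^ p) ≤ prOf μ E := by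
  have hdisj : (S : Set (Fin p → Fin q)).PairwiseDisjoint
      fun b => {π : Equiv.Perm (Fin n) | ∀ k, B (π (x k)) = b k} :=
    fun b _ b' _ hne => Set.disjoint_left.mpr fun π h1 h2 =>
      hne (funext fun k => (h1 k).symm.trans (h2 k))
  calc #S * ((1 - δ) * (1 / (q : ℝ)) ^ p)
      = ∑ _b ∈ S, (1 - δ) * (1 / (q : ℝ)) ^ p := by rw [sum_const, nsmul_eq_mul]
    _ ≤ ∑ b ∈ S, prOf μ {π | ∀ k, B (π (x k)) = b k} := sum_le_sum fun b _ => h x hx b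
    _ = prOf μ (⋃ b ∈ S, {π | ∀ k, B (π (x k)) = b k}) := (prOf_biUnion hdisj).symm
    _ ≤ prOf μ E := prOf_mono hμ (Set.iUnion₂_subset hS)

lemma card_winPattern_div_pow (τ i : Fin q) {j : ℕ} (hj : j + 1 < p) :
    (#(winPattern p τ i j) : ℝ) / (q : ℝ) ^ p
      = 1 / q * (((q : ℝ) - 1 - i) / q) ^ j * ((τ : ℝ) / q) := by
  have hq : (q : ℝ) ≠ 0 := by have := i.pos; positivity
  rw [winPattern, Fintype.card_piFinset, Nat.cast_prod, ← Fin.prod_const, ← prod_div_distrib]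
  rw [Fin.prod_univ_eq_prod_range (fun k => ((#(if k = 0 then {i} else if k ≤ j then Ioi i
    else if k = j + 1 then Iio τ else univ) : ℕ) : ℝ) / q) p]
  have hIoi : ((#(Ioi i) : ℕ) : ℝ) / q = ((q : ℝ) - 1 - i) / q := by
    rw [Fin.card_Ioi, Nat.sub_sub, Nat.cast_sub (by omega), Nat.cast_add, Nat.cast_one, sub_sub]
  rw [← prod_range_mul_prod_Ico _ (show j + 2 ≤ p by omega), prod_range_succ, prod_range_succ',
    prod_eq_one (s := Ico (j + 2) p) fun k hk => ?_,
    prod_congr rfl (g := fun _ => ((q : ℝ) - 1 - i) / q) fun k hk => ?_, prod_const, card_range]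
  · rw [if_pos rfl, if_neg (by omega), if_neg (by omega), if_pos rfl, card_singleton,
      Fin.card_Iio]
    ring
  · rw [if_neg (by omega), if_pos (show k + 1 ≤ j from mem_range.mp hk), hIoi]
  · have := (mem_Ico.mp hk).1
    simp [hq, show k ≠ 0 by omega, show ¬ k ≤ j by omega, show k ≠ j + 1 by omega]

lemma sum_card_winPattern_le_prOf {δ : ℝ} {B : Fin n → Fin q}
    (hμ : ∀ π, 0 ≤ μ π) (h : BIP n p q δ B μ) (hB : Monotone B) {v : Fin n → ℝ}
    (hv : Function.Injective v) (hpn : p ≤ n) (τ : Fin q) :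
    (1 - δ) * ∑ ij ∈ Ici τ ×ˢ range (p - 1), (#(winPattern p τ ij.1 ij.2) : ℝ) / (q : ℝ) ^ p ≤
      prOf μ {π | SecretarySuccess B τ v π} := by
  obtain ⟨x, hx_inj, hx⟩ := exists_injective_isRanking hv hpn
  have hS : ∀ b ∈ (Ici τ ×ˢ range (p - 1)).biUnion fun ij => winPattern p τ ij.1 ij.2,
      {π | ∀ k, B (π (x k)) = b k} ⊆ {π | SecretarySuccess B τ v π} := by
    intro b hb
    obtain ⟨⟨i, j⟩, hij, hb⟩ := mem_biUnion.mp hb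
    simp only [mem_product, mem_Ici, mem_range] at hij
    exact setOf_blocks_subset_success hB hv hx hij.1 (by omega) hb
  have := card_mul_le_prOf_of_BIP hμ h hx_inj hS
  rw [card_biUnion (winPattern_pairwiseDisjoint τ), Nat.cast_sum, sum_mul] at this
  refine le_trans (le_of_eq ?_) this
  rw [mul_sum]
  refine sum_congr rfl fun ij _ => ?_
  rw [one_div_pow]
  ring

lemma one_sub_pow_le_mul_geom_sum {x c : ℝ} (hx : 0 ≤ x) (hxc : x ≤ c) (N : ℕ) :
    1 - c ^ N ≤ (1 - x) * ∑ j ∈ range N, x ^ j := by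
  rw [mul_neg_geom_sum]
  gcongr

lemma div_add_one_le_sum_card_winPattern (τ i : Fin q) {c : ℝ}
    (hc : ((q : ℝ) - 1 - i) / q ≤ c) :
    (1 - c ^ (p - 1)) * ((τ : ℝ) / q) / ((i : ℝ) + 1) ≤
      ∑ j ∈ range (p - 1), (#(winPattern p τ i j) : ℝ) / (q : ℝ) ^ p := by
  have hq : (0 : ℝ) < q := by have := i.pos; positivity
  have hiq : (i : ℝ) + 1 ≤ q := by exact_mod_cast i.isLt
  have h1x : 1 / (q : ℝ) = (1 - ((q : ℝ) - 1 - i) / q) / ((i : ℝ) + 1) := by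
    field_simp
    ring
  rw [sum_congr rfl fun j hj => card_winPattern_div_pow τ i (by have := mem_range.mp hj; omega),
    ← sum_mul, ← mul_sum, h1x, div_mul_eq_mul_div, div_mul_eq_mul_div]
  gcongr
  exact one_sub_pow_le_mul_geom_sum (div_nonneg (by linarith) hq.le) hc _

lemma mul_harmonic_le_sum_card_winPattern (τ : Fin q) {c : ℝ}
    (hc : ((q : ℝ) - 1 - τ) / q ≤ c) :
    (1 - c ^ (p - 1)) * ((τ : ℝ) / q * ∑ i ∈ Ico (τ : ℕ) q, 1 / ((i : ℝ) + 1)) ≤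
      ∑ ij ∈ Ici τ ×ˢ range (p - 1), (#(winPattern p τ ij.1 ij.2) : ℝ) / (q : ℝ) ^ p := by
  rw [← Fin.map_valEmbedding_Ici, sum_map, mul_sum, mul_sum, sum_product]
  refine sum_le_sum fun i hi => ?_
  have hτi : (τ : ℝ) ≤ i := by exact_mod_cast mem_Ici.mp hi
  refine le_of_eq_of_le (by rw [Fin.valEmbedding_apply]; ring)
    (div_add_one_le_sum_card_winPattern τ i (le_trans ?_ hc))
  gcongr

end

lemma log_div_le_sum_Ico_inv {a b : ℕ} (ha : 0 < a) (hab : a ≤ b) :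
    Real.log ((b : ℝ) / a) ≤ ∑ d ∈ Ico a b, (d : ℝ)⁻¹ := by
  have ha' : (0 : ℝ) < a := Nat.cast_pos.mpr ha
  rw [← integral_inv_of_pos ha' (ha'.trans_le (Nat.cast_le.mpr hab))]
  exact (inv_antitoneOn_Icc_right ha').integral_le_sum_Ico hab

open Real in
lemma one_sub_div_le_log_div {q t : ℝ} (hq : 0 ≤ q) (ht : 0 ≤ t) (htq : t ≤ q / exp 1) :
    1 - (exp 1 - 1) / (q + 1) ≤ log ((q + 1) / (t + 1)) := by
  have he := exp_pos 1
  have hy : 0 < (q + 1) / (exp 1 * (t + 1)) := by positivity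
  have hsplit : log ((q + 1) / (t + 1)) = 1 + log ((q + 1) / (exp 1 * (t + 1))) := by
    rw [← mul_div_mul_left (q + 1) (t + 1) he.ne', mul_div_assoc, log_mul he.ne' hy.ne',
      log_exp]
  have hlog := one_sub_inv_le_log_of_pos hy
  have het : exp 1 * (t + 1) / (q + 1) ≤ 1 + (exp 1 - 1) / (q + 1) := by
    rw [le_div_iff₀ he] at htq
    rw [div_le_iff₀ (by positivity), add_mul, div_mul_cancel₀ _ (by positivity)]
    linarith
  rw [inv_div] at hlog
  linarith

open Real in
lemma one_sub_div_le_sum_Ico_floor (q : ℕ) :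
    1 - (exp 1 - 1) / (q + 1) ≤ ∑ i ∈ Ico ⌊(q : ℝ) / exp 1⌋₊ q, 1 / ((i : ℝ) + 1) := by
  set T := ⌊(q : ℝ) / exp 1⌋₊
  have hTle : (T : ℝ) ≤ q / exp 1 := Nat.floor_le (by positivity)
  have hTq : T ≤ q := by
    have : (q : ℝ) / exp 1 ≤ q := div_le_self (by positivity) (one_le_exp zero_le_one)
    exact_mod_cast hTle.trans this
  calc 1 - (exp 1 - 1) / (q + 1) ≤ log (((q + 1 : ℕ) : ℝ) / (T + 1 : ℕ)) := by
        push_cast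
        exact one_sub_div_le_log_div (by positivity) (by positivity) hTle
    _ ≤ ∑ d ∈ Ico (T + 1) (q + 1), (d : ℝ)⁻¹ := log_div_le_sum_Ico_inv (by omega) (by omega)
    _ = ∑ i ∈ Ico T q, 1 / ((i : ℝ) + 1) := by
        rw [← sum_Ico_add']
        push_cast
        simp only [one_div]

open Real in
lemma inv_exp_sub_le_mul {q a H : ℝ} (hq : 1 ≤ q) (ha : 1 / exp 1 - 1 / q ≤ a) (ha0 : 0 ≤ a)
    (hH : 1 - (exp 1 - 1) / (q + 1) ≤ H) :
    1 / exp 1 - (exp 1 + 1) / q ≤ a * H := by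
  have he2 := exp_one_gt_two
  have he3 := exp_one_lt_three
  set r := (exp 1 - 1) / (q + 1)
  have hr0 : 0 ≤ r := div_nonneg (by linarith) (by positivity)
  have hr1 : r ≤ 1 := (div_le_one (by positivity)).mpr (by linarith)
  have hr : 1 / exp 1 * r ≤ exp 1 / q := by
    rw [one_div_mul_eq_div, div_div, div_le_div_iff₀ (by positivity) (by positivity)]
    have : exp 1 - 1 ≤ exp 1 * exp 1 := by nlinarith
    nlinarith [mul_le_mul_of_nonneg_right this (by positivity : (0 : ℝ) ≤ q)]
  calc 1 / exp 1 - (exp 1 + 1) / q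
      ≤ (1 / exp 1 - 1 / q) - 1 / exp 1 * r + r / q := by
        have : 0 ≤ r / q := by positivity
        rw [add_div]
        linarith
    _ = (1 / exp 1 - 1 / q) * (1 - r) := by ring
    _ ≤ a * (1 - r) := by gcongr
    _ ≤ a * H := by gcongr

lemma sub_sub_le_one_sub_mul {L X S δ C : ℝ} (hLX : L ≤ X) (hL : L ≤ 1) (hXS : (1 - C) * X ≤ S)
    (hS : 0 ≤ S) (hδ : 0 ≤ δ) (hδ1 : δ ≤ 1) (hC : 0 ≤ C) (hC1 : C ≤ 1) :
    L - δ - C ≤ (1 - δ) * S := by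
  rcases le_or_gt L 0 with hL0 | hL0
  · nlinarith
  · have hCL : (1 - C) * L ≤ S := (mul_le_mul_of_nonneg_left hLX (by linarith)).trans hXS
    have hδ' : δ * ((1 - C) * L) ≤ δ := mul_le_of_le_one_right hδ (by nlinarith)
    nlinarith [mul_le_mul_of_nonneg_left hCL (sub_nonneg.mpr hδ1)]

theorem secretary_bip_general (n p q : ℕ) (δ : ℝ) (B : Fin n → Fin q)
    (μ : Equiv.Perm (Fin n) → ℝ) (hμ : IsDist μ) (hB : IsBlockPartition B)
    (hpn : p ≤ n) (hq : 0 < q) (hδ : 0 ≤ δ)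
    (h : BIP n p q δ B μ) (v : Fin n → ℝ) (hv : Function.Injective v) :
    1 / Real.exp 1 - (Real.exp 1 + 1) / q - δ - (1 - 1 / Real.exp 1) ^ (p - 1) ≤
      prOf μ {π | SecretarySuccess B ⌊(q : ℝ) / Real.exp 1⌋₊ v π} := by
  have he : 1 < Real.exp 1 := by linarith [Real.exp_one_gt_two]
  have he1 : 1 / Real.exp 1 < 1 := (div_lt_one (Real.exp_pos 1)).mpr he
  have hc0 : 0 ≤ 1 - 1 / Real.exp 1 := by linarith
  have hC0 : 0 ≤ (1 - 1 / Real.exp 1) ^ (p - 1) := pow_nonneg hc0 _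
  have hC1 : (1 - 1 / Real.exp 1) ^ (p - 1) ≤ 1 :=
    pow_le_one₀ hc0 (by linarith [one_div_pos.mpr (Real.exp_pos 1)])
  have hq' : (0 : ℝ) ≤ (Real.exp 1 + 1) / q := by positivity
  rcases le_or_gt 1 δ with hδ1 | hδ1
  · exact le_trans (by linarith) (prOf_nonneg hμ.1 _)
  have hTq : ⌊(q : ℝ) / Real.exp 1⌋₊ < q :=
    (Nat.floor_lt (by positivity)).mpr (div_lt_self (by positivity) he)
  set τ : Fin q := ⟨_, hTq⟩
  have hT : 1 / Real.exp 1 - 1 / q ≤ (τ : ℝ) / q :=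
    calc 1 / Real.exp 1 - 1 / q = ((q : ℝ) / Real.exp 1 - 1) / q := by field_simp
      _ ≤ τ / q := by gcongr; exact (Nat.sub_one_lt_floor _).le
  have hc : ((q : ℝ) - 1 - τ) / q ≤ 1 - 1 / Real.exp 1 := by
    rw [sub_div, sub_div, div_self (by positivity)]
    linarith
  have hratio := inv_exp_sub_le_mul (by exact_mod_cast hq) hT (by positivity)
    (one_sub_div_le_sum_Ico_floor q)
  have hmass := mul_harmonic_le_sum_card_winPattern (p := p) τ hc
  have hprob := sum_card_winPattern_le_prOf hμ.1 h hB.1 hv hpn τ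
  exact (sub_sub_le_one_sub_mul hratio (by linarith) hmass (by positivity) hδ hδ1.le hC0
    hC1).trans hprob

/-- under a `(p,q,δ)`-block-independent arrival distribution, the standard
threshold secretary algorithm with threshold `T = ⌊q/e⌋` picks the best item with
probability at least `1/e - (e+1)/q - δ - (1-1/e)^(p-1)`. -/
theorem secretary_bip (n p q : ℕ) (δ : ℝ) (B : Fin n → Fin q)
    (μ : Equiv.Perm (Fin n) → ℝ) (hμ : IsDist μ) (hB : IsBlockPartition B)
    (hp : 1 ≤ p) (hpn : p ≤ n) (hq : 0 < q) (hqn : q ≤ n) (hδ : 0 ≤ δ)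
    (h : BIP n p q δ B μ) (v : Fin n → ℝ) (hv : Function.Injective v) :
    1 / Real.exp 1 - (Real.exp 1 + 1) / q - δ - (1 - 1 / Real.exp 1) ^ (p - 1) ≤
      prOf μ {π | SecretarySuccess B ⌊(q : ℝ) / Real.exp 1⌋₊ v π} :=
  secretary_bip_general n p q δ B μ hμ hB hpn hq hδ h v hv
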